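/- arXiv:1509.00669 — 6 statements merged into one kernel-verified Lean document; each statement's English description precedes it below -/
import Mathlib

section
/- Let T be a binary tree with exactly n+1 leaves, where n ≥ 1, let r be a leaf of T, and let a be a real number with 1 < a ≤ 2n. Then T has an edge e such that the number of leaves of T lying in the connected component, of the graph obtained from T by deleting the edge e, that does not contain r is at least a/2 and strictly less than a. -/
open SimpleGraph

/-- A binary tree: a finite tree on at least two vertices in which every
vertex has degree 1 or 3. -/
structure BinTree (V : Type) : Type where
  graph : SimpleGraph V
  finiteV : Finite V
  two_le_card : 2 ≤ Nat.card V
  isTree : graph.IsTree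
  deg : ∀ v : V, (graph.neighborSet v).ncard = 1 ∨ (graph.neighborSet v).ncard = 3

/-- A vertex is a leaf when it has degree 1. -/
def BinTree.IsLeaf {V : Type} (T : BinTree V) (v : V) : Prop :=
  (T.graph.neighborSet v).ncard = 1

/-- A binary leaf-labelled tree on the label set `X`. -/
structure LTree (V X : Type) extends BinTree V where
  label : X ≃ {v : V // toBinTree.IsLeaf v}

/-- The graph resulting from an SPR move taking `xy` from `ab` to `cd`:
delete the edges `ax`, `xb`, `cd` and add the edges `ab`, `cx`, `xd`. -/
def sprGraph {V : Type} (G : SimpleGraph V) (x a b c d : V) : SimpleGraph V :=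
  SimpleGraph.fromEdgeSet ((G.edgeSet \ {s(a,x), s(x,b), s(c,d)}) ∪ {s(a,b), s(c,x), s(x,d)})

/-- `B` is obtained from `A` by the SPR move taking `xy` from `ab` to `cd`. -/
def IsSPRMoveAt {V X : Type} (A B : LTree V X) (x y a b c d : V) : Prop :=
  s(x,y) ∈ A.graph.edgeSet ∧ s(a,x) ∈ A.graph.edgeSet ∧ s(x,b) ∈ A.graph.edgeSet ∧
    s(c,d) ∈ A.graph.edgeSet ∧
    ([s(x,y), s(a,x), s(x,b), s(c,d)] : List (Sym2 V)).Nodup ∧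
    (∀ p : A.graph.Walk c y, x ∈ p.support) ∧
    B.graph = sprGraph A.graph x a b c d ∧
    ∀ z : X, ((B.label z : V) = (A.label z : V))

/-- `B` is obtained from `A` by the rSPR move (relative to the root label `r`)
taking `xy` from `ab` to `cd`. -/
def IsRSPRMoveAt {V X : Type} (r : X) (A B : LTree V X) (x y a b c d : V) : Prop :=
  IsSPRMoveAt A B x y a b c d ∧ ∀ p : A.graph.Walk (A.label r : V) y, x ∈ p.support

/-- `B` is obtained from `A` by a single SPR move. -/
def IsSPRMove {V X : Type} (A B : LTree V X) : Prop :=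
  ∃ x y a b c d : V, IsSPRMoveAt A B x y a b c d

/-- `B` is obtained from `A` by a single rSPR move. -/
def IsRSPRMove {V X : Type} (r : X) (A B : LTree V X) : Prop :=
  ∃ x y a b c d : V, IsRSPRMoveAt r A B x y a b c d

/-- Label-preserving isomorphism of binary leaf-labelled trees. -/
def LTreeIso {V W X : Type} (A : LTree V X) (B : LTree W X) : Prop :=
  ∃ e : A.graph ≃g B.graph, ∀ z : X, e (A.label z : V) = (B.label z : W)

/-- The SPR distance between two binary leaf-labelled trees on `X`. -/
noncomputable def dSPR {V W X : Type} (A : LTree V X) (B : LTree W X) : ℕ :=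
  sInf {d : ℕ | ∃ f : ℕ → LTree V X, f 0 = A ∧
    (∀ i < d, IsSPRMove (f i) (f (i+1))) ∧ LTreeIso (f d) B}

/-- The rSPR distance (relative to root label `r`) between two binary
leaf-labelled trees on `X`. -/
noncomputable def dRSPR {V W X : Type} (r : X) (A : LTree V X) (B : LTree W X) : ℕ :=
  sInf {d : ℕ | ∃ f : ℕ → LTree V X, f 0 = A ∧
    (∀ i < d, IsRSPRMove r (f i) (f (i+1))) ∧ LTreeIso (f d) B}

/-! Orient `T` away from the leaf `r` and count, for each edge, the leaves beyond it. The edge at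
`r` has `n ≥ a / 2` leaves beyond it. As long as the current edge has at least `a > 1` leaves
beyond it, its far endpoint is an inner vertex whose two outgoing edges split these leaves into two
nonempty parts; passing to the larger part keeps at least half of the leaves and strictly lowers
the count, so this descent ends at an edge whose count lies in `[a / 2, a)`. -/

namespace SimpleGraph

variable {V : Type*} {G : SimpleGraph V} {u v w x z : V}

def branch (G : SimpleGraph V) (u v : V) : Set V :=
  {z | (G.deleteEdges {s(u, v)}).Reachable v z}

def leafSet (G : SimpleGraph V) : Set V :=
  {v | (G.neighborSet v).ncard = 1}

lemma mem_branch_self : v ∈ G.branch u v := Reachable.refl v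

lemma mem_branch_swap : z ∈ G.branch v u ↔ (G.deleteEdges {s(u, v)}).Reachable u z := by
  rw [branch, Sym2.eq_swap]; rfl

lemma Reachable.mem_branch_or_mem_branch_swap (hz : G.Reachable u z) :
    z ∈ G.branch v u ∨ z ∈ G.branch u v := by
  obtain ⟨p⟩ := hz
  suffices ∀ {x y} (_ : G.Walk x y), x ∈ G.branch v u ∨ x ∈ G.branch u v →
      y ∈ G.branch v u ∨ y ∈ G.branch u v from this p (.inl mem_branch_self)
  intro x y p hx
  induction p with
  | nil => exact hx
  | @cons x x' _ hadj _ ih =>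
    refine ih ?_
    by_cases he : s(x, x') = s(u, v)
    · rcases Sym2.eq_iff.mp he with ⟨-, rfl⟩ | ⟨-, rfl⟩
      · exact .inr mem_branch_self
      · exact .inl mem_branch_self
    · have hadj' : (G.deleteEdges {s(u, v)}).Adj x x' := by simpa [he] using hadj
      rw [mem_branch_swap] at hx ⊢
      exact hx.imp (·.trans hadj'.reachable) (·.trans hadj'.reachable)

lemma IsAcyclic.disjoint_branch_swap (hG : G.IsAcyclic) (h : G.Adj u v) :
    Disjoint (G.branch u v) (G.branch v u) :=
  Set.disjoint_left.mpr fun _ hv hu =>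
    isAcyclic_iff_forall_adj_isBridge.mp hG h ((mem_branch_swap.mp hu).trans hv.symm)

lemma Reachable.deleteEdges_of_not_reachable {e : Sym2 V}
    (hxz : (G.deleteEdges {e}).Reachable x z) (hxv : ¬ (G.deleteEdges {e}).Reachable x v) :
    (G.deleteEdges {s(v, w)}).Reachable x z := by
  classical
  obtain ⟨p⟩ := hxz
  refine reachable_deleteEdges_iff_exists_walk.mpr ⟨p.mapLe (deleteEdges_le _), fun he => ?_⟩
  have hv : v ∈ p.support := by
    simpa using (p.mapLe (deleteEdges_le _)).fst_mem_support_of_mem_edges he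
  exact hxv ⟨p.takeUntil v hv⟩

lemma IsAcyclic.branch_subset_branch (hG : G.IsAcyclic) (hw : G.Adj v w) (hwu : w ≠ u) :
    G.branch v w ⊆ G.branch u v := by
  intro z hz
  have hwv : ¬ (G.deleteEdges {s(v, w)}).Reachable w v := fun h =>
    isAcyclic_iff_forall_adj_isBridge.mp hG hw h.symm
  have hvw : (G.deleteEdges {s(v, u)}).Adj v w := by
    simp [hw, hwu, hw.ne']
  rw [branch, Sym2.eq_swap]
  exact hvw.reachable.trans (Reachable.deleteEdges_of_not_reachable hz hwv)

lemma exists_mem_branch_of_mem_branch (hz : z ∈ G.branch u v) (hzv : z ≠ v) :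
    ∃ w, G.Adj v w ∧ w ≠ u ∧ z ∈ G.branch v w := by
  classical
  obtain ⟨p, hp⟩ := reachable_deleteEdges_iff_exists_walk.mp hz
  cases hpath : p.bypass with
  | nil => exact absurd rfl hzv
  | @cons _ w _ hadj q =>
    have hq : q.IsPath ∧ v ∉ q.support := by
      simpa [Walk.cons_isPath_iff, hpath] using p.bypass_isPath
    have hvw : s(v, w) ≠ s(u, v) := fun he =>
      hp (p.edges_bypass_subset_edges (by simp [hpath, he]))
    refine ⟨w, hadj, fun hwu => hvw (by rw [hwu, Sym2.eq_swap]), ?_⟩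
    exact reachable_deleteEdges_iff_exists_walk.mpr
      ⟨q, fun he => hq.2 (q.fst_mem_support_of_mem_edges he)⟩

lemma IsAcyclic.branch_eq_insert_biUnion (hG : G.IsAcyclic) :
    G.branch u v = insert v (⋃ w ∈ G.neighborSet v \ {u}, G.branch v w) := by
  refine subset_antisymm (fun z hz => ?_) ?_
  · by_cases hzv : z = v
    · exact .inl hzv
    · obtain ⟨w, hw, hwu, hzw⟩ := exists_mem_branch_of_mem_branch hz hzv
      exact .inr (Set.mem_biUnion ⟨hw, hwu⟩ hzw)
  · refine Set.insert_subset mem_branch_self (Set.iUnion₂_subset fun w hw => ?_)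
    exact hG.branch_subset_branch hw.1 hw.2

lemma IsAcyclic.disjoint_branch (hG : G.IsAcyclic) (hw : G.Adj v w) (hx : G.Adj v x)
    (hwx : w ≠ x) : Disjoint (G.branch v w) (G.branch v x) :=
  (hG.disjoint_branch_swap hw.symm).symm.mono_right (hG.branch_subset_branch hx hwx.symm)

lemma IsAcyclic.branch_eq_singleton (hG : G.IsAcyclic) (hv : G.neighborSet v = {u}) :
    G.branch u v = {v} := by
  rw [hG.branch_eq_insert_biUnion, hv, Set.sdiff_self]
  simp

lemma Preconnected.branch_eq_compl_singleton (hc : G.Preconnected) (hG : G.IsAcyclic)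
    (hv : G.neighborSet v = {u}) : G.branch v u = {v}ᶜ := by
  have huv : G.Adj u v := (show u ∈ G.neighborSet v by simp [hv]).symm
  have hleaf := hG.branch_eq_singleton hv
  ext z
  refine ⟨fun hz hzv => ?_, fun hzv => ?_⟩
  · exact (hG.disjoint_branch_swap huv).ne_of_mem (hleaf ▸ hzv) hz rfl
  · exact ((hc u z).mem_branch_or_mem_branch_swap (v := v)).resolve_right (hleaf ▸ hzv)

lemma Preconnected.not_reachable_iff_mem_branch (hc : G.Preconnected) {r : V}
    (hr : r ∉ G.branch u v) :
    ¬ (G.deleteEdges {s(u, v)}).Reachable r z ↔ z ∈ G.branch u v := by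
  refine ⟨fun hrz => ?_, fun hz hrz => hr (hz.trans hrz.symm)⟩
  have hur := mem_branch_swap.mp (((hc u r).mem_branch_or_mem_branch_swap).resolve_right hr)
  refine ((hc u z).mem_branch_or_mem_branch_swap).resolve_left fun huz => hrz ?_
  exact hur.symm.trans (mem_branch_swap.mp huz)

lemma neighborSet_eq_singleton_of_mem_leafSet (hv : v ∈ G.leafSet) (h : G.Adj v u) :
    G.neighborSet v = {u} := by
  obtain ⟨u', hu'⟩ := Set.ncard_eq_one.mp hv
  have hu : u ∈ G.neighborSet v := h
  rw [hu', Set.mem_singleton_iff] at hu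
  rwa [hu]

lemma exists_adj_ne_of_notMem_leafSet (h : G.Adj v u) (hv : v ∉ G.leafSet) :
    ∃ w, G.Adj v w ∧ w ≠ u := by
  by_contra! hw
  refine hv (Set.ncard_eq_one.mpr ⟨u, ?_⟩)
  ext w
  exact ⟨fun hvw => hw w hvw, fun hwu => hwu ▸ h⟩

theorem IsAcyclic.leafSet_inter_branch_nonempty [Finite V] (hG : G.IsAcyclic) {u v : V}
    (h : G.Adj u v) : (G.leafSet ∩ G.branch u v).Nonempty := by
  by_cases hv : v ∈ G.leafSet
  · exact ⟨v, hv, mem_branch_self⟩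
  obtain ⟨w, hw, hwu⟩ := exists_adj_ne_of_notMem_leafSet h.symm hv
  exact (hG.leafSet_inter_branch_nonempty hw).mono
    (Set.inter_subset_inter_right _ (hG.branch_subset_branch hw hwu))
termination_by (G.branch u v).ncard
decreasing_by
  refine Set.ncard_lt_ncard ⟨hG.branch_subset_branch hw hwu, fun hsub => ?_⟩ (Set.toFinite _)
  exact (hG.disjoint_branch_swap hw).ne_of_mem (hsub mem_branch_self) mem_branch_self rfl

lemma IsAcyclic.ncard_leafSet_inter_branch_eq_add [Finite V] (hG : G.IsAcyclic)
    (hv : v ∉ G.leafSet) (hN : G.neighborSet v \ {u} = {w, x}) (hwx : w ≠ x) :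
    (G.leafSet ∩ G.branch u v).ncard =
      (G.leafSet ∩ G.branch v w).ncard + (G.leafSet ∩ G.branch v x).ncard := by
  have hw : G.Adj v w := (show w ∈ G.neighborSet v \ {u} by simp [hN]).1
  have hx : G.Adj v x := (show x ∈ G.neighborSet v \ {u} by simp [hN]).1
  rw [hG.branch_eq_insert_biUnion, hN, Set.biUnion_pair, Set.inter_insert_of_notMem hv,
    Set.inter_union_distrib_left]
  exact Set.ncard_union_eq ((hG.disjoint_branch hw hx hwx).mono Set.inter_subset_right
    Set.inter_subset_right) (Set.toFinite _) (Set.toFinite _)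

theorem IsAcyclic.exists_branch_ncard_leafSet_mem_Ico [Finite V] (hG : G.IsAcyclic)
    (hdeg : ∀ v, (G.neighborSet v).ncard = 1 ∨ (G.neighborSet v).ncard = 3)
    {a : ℝ} (ha : 1 < a) {u v : V} (h : G.Adj u v)
    (hav : a ≤ 2 * ((G.leafSet ∩ G.branch u v).ncard : ℝ)) :
    ∃ x y, G.Adj x y ∧ G.branch x y ⊆ G.branch u v ∧
      a / 2 ≤ ((G.leafSet ∩ G.branch x y).ncard : ℝ) ∧
      ((G.leafSet ∩ G.branch x y).ncard : ℝ) < a := by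
  by_cases hlt : ((G.leafSet ∩ G.branch u v).ncard : ℝ) < a
  · exact ⟨u, v, h, subset_rfl, by linarith, hlt⟩
  have hv : v ∉ G.leafSet := fun hv => by
    have : (G.leafSet ∩ G.branch u v).ncard ≤ 1 := by
      rw [hG.branch_eq_singleton (neighborSet_eq_singleton_of_mem_leafSet hv h.symm)]
      exact (Set.ncard_le_ncard Set.inter_subset_right).trans (Set.ncard_singleton v).le
    exact hlt (lt_of_le_of_lt (by exact_mod_cast this) ha)
  have hN2 : (G.neighborSet v \ {u}).ncard = 2 := by
    rw [Set.ncard_sdiff_singleton_of_mem (show u ∈ G.neighborSet v from h.symm),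
      (hdeg v).resolve_left hv]
  obtain ⟨w, x, hN, hwx, hle⟩ : ∃ w x, G.neighborSet v \ {u} = {w, x} ∧ w ≠ x ∧
      (G.leafSet ∩ G.branch v x).ncard ≤ (G.leafSet ∩ G.branch v w).ncard := by
    obtain ⟨w, x, hwx, hN⟩ := Set.ncard_eq_two.mp hN2
    rcases le_total (G.leafSet ∩ G.branch v x).ncard (G.leafSet ∩ G.branch v w).ncard with
      hle | hle
    · exact ⟨w, x, hN, hwx, hle⟩
    · exact ⟨x, w, hN.trans (Set.pair_comm w x), hwx.symm, hle⟩
  have hw : w ∈ G.neighborSet v \ {u} := by simp [hN]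
  have hx : x ∈ G.neighborSet v \ {u} := by simp [hN]
  have hxpos := (Set.ncard_pos).mpr (hG.leafSet_inter_branch_nonempty hx.1)
  have hsum := hG.ncard_leafSet_inter_branch_eq_add hv hN hwx
  have hhalf : (G.leafSet ∩ G.branch u v).ncard ≤ 2 * (G.leafSet ∩ G.branch v w).ncard := by
    omega
  obtain ⟨x', y', hxy', hsub, hlo, hhi⟩ := hG.exists_branch_ncard_leafSet_mem_Ico hdeg ha hw.1
    ((not_lt.mp hlt).trans (by exact_mod_cast hhalf))
  exact ⟨x', y', hxy', hsub.trans (hG.branch_subset_branch hw.1 hw.2), hlo, hhi⟩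
termination_by (G.leafSet ∩ G.branch u v).ncard
decreasing_by omega

end SimpleGraph

theorem exists_cut_edge_general {n : ℕ} {V : Type} (T : BinTree V)
    (hleaves : {v : V | T.IsLeaf v}.ncard = n + 1)
    (r : V) (hr : T.IsLeaf r) (a : ℝ) (ha1 : 1 < a) (ha2 : a ≤ 2 * (n : ℝ)) :
    ∃ e ∈ T.graph.edgeSet,
      a / 2 ≤ ({v : V | T.IsLeaf v ∧ ¬ (T.graph.deleteEdges {e}).Reachable r v}.ncard : ℝ) ∧
      ({v : V | T.IsLeaf v ∧ ¬ (T.graph.deleteEdges {e}).Reachable r v}.ncard : ℝ) < a := by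
  have := T.finiteV
  have hc := T.isTree.connected.preconnected
  have hG := T.isTree.isAcyclic
  obtain ⟨u, hu⟩ := Set.ncard_eq_one.mp hr
  have hru : T.graph.Adj r u := show u ∈ T.graph.neighborSet r by simp [hu]
  have hroot : T.graph.branch r u = {r}ᶜ := hc.branch_eq_compl_singleton hG hu
  have hcount : (T.graph.leafSet ∩ T.graph.branch r u).ncard = n := by
    rw [hroot, ← Set.sdiff_eq,
      Set.ncard_sdiff_singleton_of_mem (show r ∈ T.graph.leafSet from hr)]
    exact Nat.sub_eq_of_eq_add hleaves
  obtain ⟨x, y, hxy, hsub, hlo, hhi⟩ :=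
    hG.exists_branch_ncard_leafSet_mem_Ico T.deg ha1 hru (by rwa [hcount])
  have hrxy : r ∉ T.graph.branch x y := fun hr' => by simpa [hroot] using hsub hr'
  have hfar : {v | T.IsLeaf v ∧ ¬ (T.graph.deleteEdges {s(x, y)}).Reachable r v} =
      T.graph.leafSet ∩ T.graph.branch x y := by
    ext z
    exact and_congr_right' (hc.not_reachable_iff_mem_branch hrxy)
  exact ⟨s(x, y), hxy, hfar ▸ hlo, hfar ▸ hhi⟩

/-- if `T` is a binary tree with exactly `n+1` leaves (`n ≥ 1`),
`r` is a leaf of `T`, and `1 < a ≤ 2n` is real, then `T` has an edge `e` such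
that the number of leaves in the component of `T - e` not containing `r` is in
`[a/2, a)`. -/
theorem exists_cut_edge {n : ℕ} (hn : 1 ≤ n) {V : Type} (T : BinTree V)
    (hleaves : {v : V | T.IsLeaf v}.ncard = n + 1)
    (r : V) (hr : T.IsLeaf r) (a : ℝ) (ha1 : 1 < a) (ha2 : a ≤ 2 * (n : ℝ)) :
    ∃ e ∈ T.graph.edgeSet,
      a / 2 ≤ ({v : V | T.IsLeaf v ∧ ¬ (T.graph.deleteEdges {e}).Reachable r v}.ncard : ℝ) ∧
      ({v : V | T.IsLeaf v ∧ ¬ (T.graph.deleteEdges {e}).Reachable r v}.ncard : ℝ) < a :=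
  exists_cut_edge_general T hleaves r hr a ha1 ha2
end

section
/- Let T be a binary tree with exactly n+1 leaves, where n ≥ 1, and let a > 1 be a real number. Then there is a finite collection of pairwise disjoint sets of vertices of T, each of which induces a connected subgraph of T, whose union contains every leaf of T, such that each set in the collection contains strictly fewer than a leaves of T and at most one set in the collection contains strictly fewer than a/2 leaves of T. -/
open SimpleGraph

/-!
Cut the tree into pieces greedily. Call `P ⊆ S` a splitting piece of a connected vertex set `S`
if `P` and `S \ P` are connected and `P` has at least `a / 2` leaves. One exists as soon as `S`
has at least `a` leaves: for a component `C` of `S` minus a vertex, keep the heavier of `C` and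
`S \ C`. A splitting piece `P` of minimal size has fewer than `a` leaves. Indeed, take `v ∈ P`
adjacent to some `u ∈ S \ P`; every component of `P \ {v}` has fewer than `a / 2` leaves, being
otherwise a smaller splitting piece. If `v` is a leaf then `P = {v}`. Otherwise `v` has degree
three, and `P` is covered by `v` and the components of `P \ {v}` at the two neighbours of `v`
other than `u`. Cutting off such pieces while at least `a` leaves remain, only the last piece
can have fewer than `a / 2` leaves.
-/

namespace SimpleGraph

variable {V : Type*} {G : SimpleGraph V} {A B : Set V} {v w x y : V}

def ReachableIn (G : SimpleGraph V) (A : Set V) (x y : V) : Prop :=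
  ∃ p : G.Walk x y, ∀ z ∈ p.support, z ∈ A

def IsConnectedSet (G : SimpleGraph V) (A : Set V) : Prop :=
  A.Nonempty ∧ ∀ x ∈ A, ∀ y ∈ A, G.ReachableIn A x y

def componentIn (G : SimpleGraph V) (A : Set V) (w : V) : Set V :=
  {x | G.ReachableIn A x w}

namespace ReachableIn

lemma mem_left (h : G.ReachableIn A x y) : x ∈ A := by
  obtain ⟨p, hp⟩ := h
  exact hp x p.start_mem_support

lemma mem_right (h : G.ReachableIn A x y) : y ∈ A := by
  obtain ⟨p, hp⟩ := h
  exact hp y p.end_mem_support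

lemma refl (hx : x ∈ A) : G.ReachableIn A x x :=
  ⟨.nil, by simpa using hx⟩

lemma symm (h : G.ReachableIn A x y) : G.ReachableIn A y x := by
  obtain ⟨p, hp⟩ := h
  exact ⟨p.reverse, by simpa using hp⟩

lemma trans (h : G.ReachableIn A x y) (h' : G.ReachableIn A y w) : G.ReachableIn A x w := by
  obtain ⟨p, hp⟩ := h
  obtain ⟨q, hq⟩ := h'
  refine ⟨p.append q, fun z hz => ?_⟩
  rcases (Walk.mem_support_append_iff _ _).mp hz with hz | hz
  exacts [hp z hz, hq z hz]

lemma mono (h : G.ReachableIn A x y) (hAB : A ⊆ B) : G.ReachableIn B x y := by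
  obtain ⟨p, hp⟩ := h
  exact ⟨p, fun z hz => hAB (hp z hz)⟩

lemma of_adj (hxy : G.Adj x y) (hx : x ∈ A) (hy : y ∈ A) : G.ReachableIn A x y :=
  ⟨hxy.toWalk, by simp [hx, hy]⟩

lemma restrict (h : G.ReachableIn A x y)
    (hB : ∀ z z', z ∈ B → z' ∈ A → G.Adj z z' → z' ∈ B) (hx : x ∈ B) :
    G.ReachableIn B x y := by
  obtain ⟨p, hp⟩ := h
  induction p with
  | nil => exact refl hx
  | cons hxz q ih =>
    have hq : ∀ z ∈ q.support, z ∈ A := fun z hz => hp z (List.mem_cons_of_mem _ hz)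
    have hz := hB _ _ hx (hq _ q.start_mem_support) hxz
    exact (of_adj hxz hx hz).trans (ih hz hq)

lemma exists_adj_of_ne (h : G.ReachableIn A x v) (hxv : x ≠ v) :
    ∃ w, G.Adj v w ∧ G.ReachableIn (A \ {v}) x w := by
  obtain ⟨p, hp⟩ := h
  induction p with
  | nil => exact absurd rfl hxv
  | @cons x y v hxy q ih =>
    have hx : x ∈ A \ {v} := ⟨hp x (by simp), hxv⟩
    by_cases hyv : y = v
    · subst hyv
      exact ⟨x, hxy.symm, refl hx⟩
    · obtain ⟨w, hvw, hyw⟩ := ih hyv (fun z hz => hp z (List.mem_cons_of_mem _ hz))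
      exact ⟨w, hvw, (of_adj hxy hx hyw.mem_left).trans hyw⟩

lemma exists_adj_sdiff (h : G.ReachableIn A x y) (hx : x ∈ B) (hy : y ∉ B) :
    ∃ v ∈ B, ∃ u ∈ A \ B, G.Adj v u := by
  obtain ⟨p, hp⟩ := h
  induction p with
  | nil => exact absurd hx hy
  | @cons x z y hxz q ih =>
    have hz : z ∈ A := hp z (List.mem_cons_of_mem _ q.start_mem_support)
    by_cases hzB : z ∈ B
    · exact ih hzB hy (fun z hz => hp z (List.mem_cons_of_mem _ hz))
    · exact ⟨x, hx, z, ⟨hz, hzB⟩, hxz⟩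

end ReachableIn

lemma componentIn_subset : G.componentIn A w ⊆ A :=
  fun _ hx => ReachableIn.mem_left hx

lemma mem_componentIn_self (hw : w ∈ A) : w ∈ G.componentIn A w :=
  ReachableIn.refl hw

lemma ReachableIn.sdiff_componentIn (h : G.ReachableIn A x y) (hx : x ∉ G.componentIn A w) :
    G.ReachableIn (A \ G.componentIn A w) x y :=
  h.restrict (fun _ _ hz hz' hzz' => ⟨hz', fun h' => hz.2 ((of_adj hzz' hz.1 hz').trans h')⟩)
    ⟨h.mem_left, hx⟩

namespace IsConnectedSet

lemma of_forall_reachableIn (hv : v ∈ A) (h : ∀ x ∈ A, G.ReachableIn A x v) :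
    G.IsConnectedSet A :=
  ⟨⟨v, hv⟩, fun x hx y hy => (h x hx).trans (h y hy).symm⟩

lemma induce_connected (h : G.IsConnectedSet A) : (G.induce A).Connected := by
  obtain ⟨⟨x, hx⟩, hA⟩ := h
  refine induce_connected_of_patches x hx fun {y} hy => ?_
  obtain ⟨p, hp⟩ := hA x hx y hy
  exact ⟨{z | z ∈ p.support}, hp, p.start_mem_support, p.end_mem_support,
    p.connected_induce_support.preconnected _ _⟩

lemma union_of_adj (hA : G.IsConnectedSet A) (hB : G.IsConnectedSet B) (hx : x ∈ A)
    (hy : y ∈ B) (hxy : G.Adj x y) : G.IsConnectedSet (A ∪ B) := by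
  refine of_forall_reachableIn (Or.inl hx) fun z hz => ?_
  rcases hz with hz | hz
  · exact (hA.2 z hz x hx).mono Set.subset_union_left
  · exact ((hB.2 z hz y hy).mono Set.subset_union_right).trans
      (ReachableIn.of_adj hxy.symm (Or.inr hy) (Or.inl hx))

lemma exists_adj_sdiff (hA : G.IsConnectedSet A) (hB : B.Nonempty) (hAB : (A \ B).Nonempty)
    (hBA : B ⊆ A) : ∃ v ∈ B, ∃ u ∈ A \ B, G.Adj v u := by
  obtain ⟨x, hx⟩ := hB
  obtain ⟨y, hyA, hyB⟩ := hAB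
  exact (hA.2 x (hBA hx) y hyA).exists_adj_sdiff hx hyB

lemma componentIn (hw : w ∈ A) : G.IsConnectedSet (G.componentIn A w) :=
  of_forall_reachableIn (mem_componentIn_self hw) fun _ hx => hx.restrict
    (fun _ _ hz hz' hzz' => (ReachableIn.of_adj hzz'.symm hz' hz.mem_left).trans hz) hx

lemma exists_adj_mem_componentIn (hA : G.IsConnectedSet A) (hv : v ∈ A) (hx : x ∈ A)
    (hxv : x ≠ v) : ∃ w ∈ A, G.Adj v w ∧ x ∈ G.componentIn (A \ {v}) w := by
  obtain ⟨w, hvw, hxw⟩ := (hA.2 x hx v hv).exists_adj_of_ne hxv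
  exact ⟨w, hxw.mem_right.1, hvw, hxw⟩

lemma sdiff_componentIn (hA : G.IsConnectedSet A) (hv : v ∈ A) :
    G.IsConnectedSet (A \ G.componentIn (A \ {v}) w) := by
  have hvC : v ∉ G.componentIn (A \ {v}) w := fun h => (componentIn_subset h).2 rfl
  refine of_forall_reachableIn ⟨hv, hvC⟩ fun x ⟨hx, hxC⟩ => ?_
  rcases eq_or_ne x v with rfl | hxv
  · exact ReachableIn.refl ⟨hx, hvC⟩
  obtain ⟨w', hvw', hxw'⟩ := (hA.2 x hx v hv).exists_adj_of_ne hxv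
  have hxw'' := (hxw'.sdiff_componentIn hxC).mono (Set.sdiff_subset_sdiff_left Set.sdiff_subset)
  exact hxw''.trans (ReachableIn.of_adj hvw'.symm hxw''.mem_right ⟨hv, hvC⟩)

end IsConnectedSet

end SimpleGraph

namespace BinTree

variable {V : Type} {T : BinTree V} {a : ℝ} {s t t' S P : Set V} {u v : V}
  {𝒞 : Finset (Set V)}

variable (T) in
noncomputable def leafCount (s : Set V) : ℕ := {v ∈ s | T.IsLeaf v}.ncard

lemma leafCount_mono (h : s ⊆ t) : T.leafCount s ≤ T.leafCount t :=
  have := T.finiteV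
  Set.ncard_le_ncard fun _ hv => ⟨h hv.1, hv.2⟩

lemma leafCount_union_le (s t : Set V) :
    T.leafCount (s ∪ t) ≤ T.leafCount s + T.leafCount t := by
  have := T.finiteV
  refine (Set.ncard_le_ncard fun v hv => ?_).trans (Set.ncard_union_le _ _)
  exact hv.1.imp (⟨·, hv.2⟩) (⟨·, hv.2⟩)

lemma leafCount_add_leafCount_sdiff (h : t ⊆ s) :
    T.leafCount t + T.leafCount (s \ t) = T.leafCount s := by
  have := T.finiteV
  rw [leafCount, leafCount, leafCount,
    ← Set.ncard_inter_add_ncard_sdiff_eq_ncard {v ∈ s | T.IsLeaf v} t]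
  congr 1 <;> congr 1 <;> ext v
  · exact ⟨fun ⟨hv, hl⟩ => ⟨⟨h hv, hl⟩, hv⟩, fun ⟨⟨_, hl⟩, hv⟩ => ⟨hv, hl⟩⟩
  · exact ⟨fun ⟨⟨hs, ht⟩, hl⟩ => ⟨⟨hs, hl⟩, ht⟩, fun ⟨⟨hs, hl⟩, ht⟩ => ⟨⟨hs, ht⟩, hl⟩⟩

lemma leafCount_singleton_le_one (v : V) : T.leafCount {v} ≤ 1 :=
  have := T.finiteV
  (Set.ncard_le_ncard fun _ hx => hx.1).trans (Set.ncard_singleton v).le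

lemma leafCount_singleton_of_not_isLeaf (h : ¬ T.IsLeaf v) : T.leafCount {v} = 0 := by
  rw [leafCount, Set.ncard_eq_zero, Set.eq_empty_iff_forall_notMem]
  rintro x ⟨rfl, hx⟩
  exact h hx

lemma leafCount_le_add_of_subset_insert (hv : ¬ T.IsLeaf v) (h : s ⊆ insert v (t ∪ t')) :
    T.leafCount s ≤ T.leafCount t + T.leafCount t' :=
  calc T.leafCount s ≤ T.leafCount ({v} ∪ (t ∪ t')) := leafCount_mono h
    _ ≤ T.leafCount {v} + (T.leafCount t + T.leafCount t') :=
      (leafCount_union_le _ _).trans (Nat.add_le_add_left (leafCount_union_le _ _) _)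
    _ = T.leafCount t + T.leafCount t' := by rw [leafCount_singleton_of_not_isLeaf hv, zero_add]

variable (T) in
lemma isConnectedSet_univ : T.graph.IsConnectedSet Set.univ := by
  obtain ⟨x⟩ := T.isTree.connected.nonempty
  exact ⟨⟨x, trivial⟩, fun x _ y _ => ⟨(T.isTree.connected x y).some, fun _ _ => trivial⟩⟩

variable (T) in
structure IsSplittingPiece (a : ℝ) (S P : Set V) : Prop where
  subset : P ⊆ S
  isConnectedSet : T.graph.IsConnectedSet P
  isConnectedSet_sdiff : T.graph.IsConnectedSet (S \ P)
  half_le_leafCount : a / 2 ≤ T.leafCount P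

lemma exists_isSplittingPiece (hS : T.graph.IsConnectedSet S) (ha : 1 < a)
    (hcnt : a ≤ T.leafCount S) : ∃ P, T.IsSplittingPiece a S P := by
  have := T.finiteV
  obtain ⟨x, y, hx, hy, hxy⟩ := (Set.one_lt_ncard_iff (Set.toFinite _)).mp
    (by exact_mod_cast ha.trans_le hcnt : 1 < T.leafCount S)
  set C := T.graph.componentIn (S \ {x}) y
  have hCS : C ⊆ S := fun z hz => (componentIn_subset hz).1
  have hC : T.graph.IsConnectedSet C := .componentIn ⟨hy.1, hxy.symm⟩
  have hSC : T.graph.IsConnectedSet (S \ C) := hS.sdiff_componentIn hx.1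
  have hsum : (T.leafCount C : ℝ) + T.leafCount (S \ C) = T.leafCount S := by
    exact_mod_cast leafCount_add_leafCount_sdiff hCS
  by_cases hhalf : a / 2 ≤ T.leafCount C
  · exact ⟨C, hCS, hC, hSC, hhalf⟩
  · refine ⟨S \ C, Set.sdiff_subset, hSC, ?_, by linarith⟩
    rwa [Set.sdiff_sdiff_cancel_left hCS]

lemma IsSplittingPiece.leafCount_componentIn_lt (hP : T.IsSplittingPiece a S P)
    (hmin : ∀ Q, T.IsSplittingPiece a S Q → P.ncard ≤ Q.ncard) (ha : 0 < a)
    (hv : v ∈ P) (hu : u ∈ S \ P) (hvu : T.graph.Adj v u) (w : V) :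
    (T.leafCount (T.graph.componentIn (P \ {v}) w) : ℝ) < a / 2 := by
  have := T.finiteV
  set C := T.graph.componentIn (P \ {v}) w
  by_contra! hhalf
  obtain ⟨z, hz, -⟩ : {z ∈ C | T.IsLeaf z}.Nonempty := by
    refine Set.nonempty_of_ncard_ne_zero fun h0 => ?_
    rw [leafCount, h0, Nat.cast_zero] at hhalf
    linarith
  have hCP : C ⊆ P := fun z hz => (componentIn_subset hz).1
  have hvC : v ∉ C := fun h => (componentIn_subset h).2 rfl
  have hSC : S \ C = (P \ C) ∪ (S \ P) := by
    ext x
    have := @hCP x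
    have := @hP.subset x
    simp only [Set.mem_sdiff, Set.mem_union]
    tauto
  have hpiece : T.IsSplittingPiece a S C :=
    ⟨hCP.trans hP.subset, .componentIn (ReachableIn.mem_right hz),
      hSC ▸ (hP.isConnectedSet.sdiff_componentIn hv).union_of_adj hP.isConnectedSet_sdiff
        ⟨hv, hvC⟩ hu hvu, hhalf⟩
  have hCP' : C ⊂ P := (Set.ssubset_iff_of_subset hCP).mpr ⟨v, hv, hvC⟩
  exact (hmin C hpiece).not_gt (Set.ncard_lt_ncard hCP')

lemma IsSplittingPiece.leafCount_lt_of_minimal (hS : T.graph.IsConnectedSet S)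
    (hP : T.IsSplittingPiece a S P) (hmin : ∀ Q, T.IsSplittingPiece a S Q → P.ncard ≤ Q.ncard)
    (ha : 1 < a) : (T.leafCount P : ℝ) < a := by
  have := T.finiteV
  obtain ⟨v, hv, u, hu, hvu⟩ :=
    hS.exists_adj_sdiff hP.isConnectedSet.1 hP.isConnectedSet_sdiff.1 hP.subset
  have hcover (x) (hx : x ∈ P) (hxv : x ≠ v) :
      ∃ w ∈ T.graph.neighborSet v \ {u}, x ∈ T.graph.componentIn (P \ {v}) w := by
    obtain ⟨w, hwP, hvw, hxw⟩ := hP.isConnectedSet.exists_adj_mem_componentIn hv hx hxv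
    exact ⟨w, ⟨hvw, fun hwu => hu.2 (hwu ▸ hwP)⟩, hxw⟩
  rcases T.deg v with hdeg | hdeg
  · have hPv : P ⊆ {v} := fun x hx => by
      by_contra hxv
      obtain ⟨w, ⟨hvw, hwu⟩, -⟩ := hcover x hx hxv
      exact hwu ((Set.ncard_le_one_iff (Set.toFinite _)).mp hdeg.le hvw hvu)
    have : (T.leafCount P : ℝ) ≤ 1 := by
      exact_mod_cast (leafCount_mono hPv).trans (leafCount_singleton_le_one v)
    linarith
  · obtain ⟨b, c, -, hbc⟩ := Set.ncard_eq_two.mp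
      (by rw [Set.ncard_sdiff_singleton_of_mem (s := T.graph.neighborSet v) hvu, hdeg] :
        (T.graph.neighborSet v \ {u}).ncard = 2)
    set C := T.graph.componentIn (P \ {v})
    have hPsub : P ⊆ insert v (C b ∪ C c) := fun x hx => by
      by_cases hxv : x = v
      · exact Or.inl hxv
      obtain ⟨w, hw, hxw⟩ := hcover x hx hxv
      rw [hbc] at hw
      rcases hw with rfl | rfl
      exacts [Or.inr (Or.inl hxw), Or.inr (Or.inr hxw)]
    have hvl : ¬ T.IsLeaf v := by rw [IsLeaf, hdeg]; decide
    have hle : (T.leafCount P : ℝ) ≤ T.leafCount (C b) + T.leafCount (C c) := by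
      exact_mod_cast leafCount_le_add_of_subset_insert hvl hPsub
    have hsmall := hP.leafCount_componentIn_lt hmin (by linarith) hv hu hvu
    linarith [hsmall b, hsmall c]

lemma exists_isSplittingPiece_leafCount_lt (hS : T.graph.IsConnectedSet S) (ha : 1 < a)
    (hcnt : a ≤ T.leafCount S) :
    ∃ P, T.IsSplittingPiece a S P ∧ (T.leafCount P : ℝ) < a := by
  obtain ⟨P, hP, hmin⟩ := (measure Set.ncard).wf.has_min {P | T.IsSplittingPiece a S P}
    (exists_isSplittingPiece hS ha hcnt)
  exact ⟨P, hP, hP.leafCount_lt_of_minimal hS (fun Q hQ => not_lt.mp (hmin Q hQ)) ha⟩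

variable (T) in
structure IsDivision (a : ℝ) (S : Set V) (𝒞 : Finset (Set V)) : Prop where
  subset : ∀ s ∈ 𝒞, s ⊆ S
  pairwise_disjoint : ∀ s ∈ 𝒞, ∀ t ∈ 𝒞, s ≠ t → Disjoint s t
  isConnectedSet : ∀ s ∈ 𝒞, T.graph.IsConnectedSet s
  cover : ∀ x ∈ S, ∃ s ∈ 𝒞, x ∈ s
  leafCount_lt : ∀ s ∈ 𝒞, (T.leafCount s : ℝ) < a
  eq_of_leafCount_lt_half : ∀ s ∈ 𝒞, ∀ t ∈ 𝒞,
    (T.leafCount s : ℝ) < a / 2 → (T.leafCount t : ℝ) < a / 2 → s = t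

lemma isDivision_singleton (hS : T.graph.IsConnectedSet S) (hcnt : (T.leafCount S : ℝ) < a) :
    T.IsDivision a S {S} := by
  refine ⟨?_, ?_, ?_, ?_, ?_, ?_⟩ <;> simp only [Finset.mem_singleton, forall_eq]
  exacts [subset_rfl, fun h => absurd rfl h, hS, fun x hx => ⟨S, rfl, hx⟩, hcnt,
    fun _ _ => trivial]

lemma IsDivision.insert (h𝒞 : T.IsDivision a (S \ P) 𝒞) (hPS : P ⊆ S)
    (hP : T.graph.IsConnectedSet P) (hhalf : a / 2 ≤ T.leafCount P)
    (hlt : (T.leafCount P : ℝ) < a) : T.IsDivision a S (insert P 𝒞) := by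
  have hdisj : ∀ t ∈ 𝒞, Disjoint P t :=
    fun t ht => Set.disjoint_left.mpr fun _ hx hxt => (h𝒞.subset t ht hxt).2 hx
  refine ⟨?_, ?_, ?_, fun x hx => ?_, ?_, ?_⟩
  · simp only [Finset.forall_mem_insert]
    exact ⟨hPS, fun s hs => (h𝒞.subset s hs).trans Set.sdiff_subset⟩
  · simp only [Finset.forall_mem_insert]
    exact ⟨⟨fun h => absurd rfl h, fun t ht _ => hdisj t ht⟩,
      fun s hs => ⟨fun _ => (hdisj s hs).symm, h𝒞.pairwise_disjoint s hs⟩⟩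
  · simp only [Finset.forall_mem_insert]
    exact ⟨hP, h𝒞.isConnectedSet⟩
  · by_cases hxP : x ∈ P
    · exact ⟨P, Finset.mem_insert_self _ _, hxP⟩
    · obtain ⟨s, hs, hxs⟩ := h𝒞.cover x ⟨hx, hxP⟩
      exact ⟨s, Finset.mem_insert_of_mem hs, hxs⟩
  · simp only [Finset.forall_mem_insert]
    exact ⟨hlt, h𝒞.leafCount_lt⟩
  · have hhalf' : ¬ (T.leafCount P : ℝ) < a / 2 := not_lt.mpr hhalf
    simp only [Finset.forall_mem_insert, hhalf', false_imp_iff, implies_true, true_and]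
    exact h𝒞.eq_of_leafCount_lt_half

lemma exists_isDivision (ha : 1 < a) (hS : T.graph.IsConnectedSet S) :
    ∃ 𝒞, T.IsDivision a S 𝒞 := by
  have := T.finiteV
  induction hn : S.ncard using Nat.strong_induction_on generalizing S with
  | _ n ih =>
  by_cases hcnt : (T.leafCount S : ℝ) < a
  · exact ⟨{S}, isDivision_singleton hS hcnt⟩
  obtain ⟨P, hP, hlt⟩ := exists_isSplittingPiece_leafCount_lt hS ha (not_lt.mp hcnt)
  obtain ⟨x, hx⟩ := hP.isConnectedSet.1
  have hcard : (S \ P).ncard < n :=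
    hn ▸ Set.ncard_lt_ncard (Set.sdiff_ssubset_left_iff.mpr ⟨x, hP.subset hx, hx⟩)
  obtain ⟨𝒞, h𝒞⟩ := ih _ hcard hP.isConnectedSet_sdiff rfl
  exact ⟨insert P 𝒞, h𝒞.insert hP.subset hP.isConnectedSet hP.half_le_leafCount hlt⟩

end BinTree

theorem exists_tree_division_general {V : Type} (T : BinTree V) (a : ℝ) (ha : 1 < a) :
    ∃ 𝒞 : Finset (Set V),
      (∀ s ∈ 𝒞, ∀ t ∈ 𝒞, s ≠ t → Disjoint s t) ∧
      (∀ s ∈ 𝒞, (T.graph.induce s).Connected) ∧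
      (∀ v : V, T.IsLeaf v → ∃ s ∈ 𝒞, v ∈ s) ∧
      (∀ s ∈ 𝒞, ({v ∈ s | T.IsLeaf v}.ncard : ℝ) < a) ∧
      (∀ s ∈ 𝒞, ∀ t ∈ 𝒞, ({v ∈ s | T.IsLeaf v}.ncard : ℝ) < a / 2 →
        ({v ∈ t | T.IsLeaf v}.ncard : ℝ) < a / 2 → s = t) := by
  obtain ⟨𝒞, h𝒞⟩ := T.exists_isDivision ha T.isConnectedSet_univ
  exact ⟨𝒞, h𝒞.pairwise_disjoint, fun s hs => (h𝒞.isConnectedSet s hs).induce_connected,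
    fun v _ => h𝒞.cover v trivial, h𝒞.leafCount_lt, h𝒞.eq_of_leafCount_lt_half⟩

/-- if `T` is a binary tree with exactly `n+1` leaves (`n ≥ 1`) and
`a > 1` is real, then there is a finite collection of pairwise disjoint vertex
sets, each inducing a connected subgraph of `T`, covering all leaves, with each
set containing fewer than `a` leaves and at most one set containing fewer than
`a/2` leaves. -/
theorem exists_tree_division {n : ℕ} (hn : 1 ≤ n) {V : Type} (T : BinTree V)
    (hleaves : {v : V | T.IsLeaf v}.ncard = n + 1)
    (a : ℝ) (ha : 1 < a) :
    ∃ 𝒞 : Finset (Set V),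
      (∀ s ∈ 𝒞, ∀ t ∈ 𝒞, s ≠ t → Disjoint s t) ∧
      (∀ s ∈ 𝒞, (T.graph.induce s).Connected) ∧
      (∀ v : V, T.IsLeaf v → ∃ s ∈ 𝒞, v ∈ s) ∧
      (∀ s ∈ 𝒞, ({v ∈ s | T.IsLeaf v}.ncard : ℝ) < a) ∧
      (∀ s ∈ 𝒞, ∀ t ∈ 𝒞, ({v ∈ s | T.IsLeaf v}.ncard : ℝ) < a / 2 →
        ({v ∈ t | T.IsLeaf v}.ncard : ℝ) < a / 2 → s = t) :=
  exists_tree_division_general T a ha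
end

section
/- Let X be a finite set, let k ≥ 1 and t ≥ 1 be integers, and let s ≥ 0 be an integer. For each i ∈ {1,…,k} let P_i : X → {1,…,t} be a map each of whose fibres P_i^{-1}(j) has size at most s. Call a map τ : {1,…,k} → {1,…,t} a token; for a token τ let I(τ) = {x ∈ X : P_i(x) = τ(i) for all i ∈ {1,…,k}}, and call τ good if |I(τ)| ≥ 2. Suppose T is a finite set of good tokens such that every good token σ satisfies σ(i) = τ(i) for some τ ∈ T and some i ∈ {1,…,k}. Then |X| ≤ t^k + k·s·|T|. -/
/-- Let `X` be a finite set, `k, t ≥ 1`, `s ≥ 0`, and for each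
`i ∈ {1,…,k}` let `P i : X → {1,…,t}` have all fibres of size at most `s`.
Calling a map `τ : {1,…,k} → {1,…,t}` a good token when its "intersection"
`I(τ) = {x | ∀ i, P i x = τ i}` has at least two elements, suppose `T` is a set
of good tokens such that every good token agrees in some coordinate with some
member of `T`.  Then `|X| ≤ t^k + k·s·|T|`. -/
theorem token_count {X : Type} [Fintype X] (k t s : ℕ) (hk : 1 ≤ k) (ht : 1 ≤ t)
    (P : Fin k → X → Fin t)
    (hfib : ∀ (i : Fin k) (j : Fin t), {x : X | P i x = j}.ncard ≤ s)
    (T : Finset (Fin k → Fin t))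
    (hTgood : ∀ τ ∈ T, 2 ≤ {x : X | ∀ i, P i x = τ i}.ncard)
    (hTmax : ∀ σ : Fin k → Fin t, 2 ≤ {x : X | ∀ i, P i x = σ i}.ncard →
      ∃ τ ∈ T, ∃ i : Fin k, σ i = τ i) :
    Fintype.card X ≤ t ^ k + k * s * T.card := by
  classical
  set f : X → (Fin k → Fin t) := fun x i => P i x with hf
  set A : Finset X := Finset.univ.filter
    (fun x => ¬ 2 ≤ {y : X | ∀ i, P i y = f x i}.ncard) with hA
  set B : Finset X := Finset.univ.filter
    (fun x => 2 ≤ {y : X | ∀ i, P i y = f x i}.ncard) with hB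
  have hsplit : B.card + A.card = Fintype.card X := by
    rw [hA, hB, Finset.card_filter_add_card_filter_not (p := fun x =>
      2 ≤ {y : X | ∀ i, P i y = f x i}.ncard), Finset.card_univ]
  have hAle : A.card ≤ t ^ k := by
    have hinj : Set.InjOn f A := by
      intro x hx y hy hxy
      by_contra hne
      have hmem : x ∈ A := hx
      rw [hA, Finset.mem_filter] at hmem
      apply hmem.2
      have h2 : ({x, y} : Set X) ⊆ {z : X | ∀ i, P i z = f x i} := by
        intro z hz
        rcases hz with hz | hz
        · subst hz; intro i; rfl
        · simp only [Set.mem_singleton_iff] at hz; subst hz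
          intro i; exact (congrFun hxy i).symm
      calc 2 = ({x, y} : Set X).ncard := (Set.ncard_pair hne).symm
        _ ≤ _ := Set.ncard_le_ncard h2 (Set.toFinite _)
    calc A.card = (A.image f).card := (Finset.card_image_of_injOn hinj).symm
      _ ≤ Fintype.card (Fin k → Fin t) := Finset.card_le_univ _
      _ = t ^ k := by simp
  have hBle : B.card ≤ k * s * T.card := by
    have hsub : B ⊆ T.biUnion (fun τ => Finset.univ.biUnion
        (fun i : Fin k => Finset.univ.filter (fun x => P i x = τ i))) := by
      intro x hx
      rw [hB, Finset.mem_filter] at hx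
      obtain ⟨τ, hτT, i, hi⟩ := hTmax (f x) hx.2
      simp only [Finset.mem_biUnion, Finset.mem_filter, Finset.mem_univ, true_and]
      exact ⟨τ, hτT, i, hi⟩
    calc B.card ≤ _ := Finset.card_le_card hsub
      _ ≤ ∑ τ ∈ T, (Finset.univ.biUnion
          (fun i : Fin k => Finset.univ.filter (fun x => P i x = τ i))).card :=
        Finset.card_biUnion_le
      _ ≤ ∑ τ ∈ T, ∑ i : Fin k, (Finset.univ.filter (fun x => P i x = τ i)).card :=
        Finset.sum_le_sum fun τ _ => Finset.card_biUnion_le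
      _ ≤ ∑ τ ∈ T, ∑ i : Fin k, s := by
        refine Finset.sum_le_sum fun τ _ => Finset.sum_le_sum fun i _ => ?_
        simpa [Set.ncard_eq_toFinset_card', Set.toFinset_setOf] using hfib i (τ i)
      _ = k * s * T.card := by
        simp [Finset.sum_const, mul_comm, mul_assoc, mul_left_comm]
  omega
end

section
/- Let n > k ≥ 2 be integers, set t = ⌊((n+1)/(k+1))^{1/k}⌋ (where the k-th root is taken in the reals) and a = 2(n+1)/t. If m is a non-negative integer satisfying t^k + k·a·m > n+1, then m ≥ (t+1)/(2(k+1)), and consequently m > (1/(2(k+1)))·((n+1)/(k+1))^{1/k}. -/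
/-- for integers `n > k ≥ 2`, with `t = ⌊((n+1)/(k+1))^(1/k)⌋` and
`a = 2(n+1)/t`, any non-negative integer `m` with `t^k + k·a·m > n+1` satisfies
`m ≥ (t+1)/(2(k+1))`, and consequently
`m > (1/(2(k+1)))·((n+1)/(k+1))^(1/k)`. -/
theorem token_lower_bound (n k : ℕ) (hk : 2 ≤ k) (hkn : k < n)
    (t : ℕ) (ht : t = ⌊(((n : ℝ) + 1) / ((k : ℝ) + 1)) ^ ((1 : ℝ) / (k : ℝ))⌋₊)
    (a : ℝ) (ha : a = 2 * ((n : ℝ) + 1) / (t : ℝ))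
    (m : ℕ) (hm : (t : ℝ) ^ k + (k : ℝ) * a * (m : ℝ) > (n : ℝ) + 1) :
    ((t : ℝ) + 1) / (2 * ((k : ℝ) + 1)) ≤ (m : ℝ) ∧
      (1 / (2 * ((k : ℝ) + 1))) * (((n : ℝ) + 1) / ((k : ℝ) + 1)) ^ ((1 : ℝ) / (k : ℝ))
        < (m : ℝ) := by
  set x : ℝ := ((n : ℝ) + 1) / ((k : ℝ) + 1) with hxdef
  set r : ℝ := x ^ ((1 : ℝ) / (k : ℝ)) with hrdef
  have hk0 : (0:ℝ) < (k:ℝ) := by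
    have : 0 < k := by omega
    exact_mod_cast this
  have hkn' : (k:ℝ) < (n:ℝ) := by exact_mod_cast hkn
  have hx1 : 1 < x := by
    rw [hxdef, lt_div_iff₀ (by positivity)]
    linarith
  have hx0 : (0:ℝ) < x := by linarith
  have hr1 : 1 < r := by
    rw [hrdef]
    exact Real.one_lt_rpow_iff_of_pos hx0 |>.mpr (Or.inl ⟨hx1, by positivity⟩)
  have ht1 : 1 ≤ t := by
    rw [ht]
    exact Nat.le_floor (by exact_mod_cast hr1.le)
  have htpos : (0:ℝ) < (t:ℝ) := by exact_mod_cast ht1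
  have htr : (t:ℝ) ≤ r := by rw [ht]; exact Nat.floor_le (by linarith)
  have hrk : r ^ k = x := by
    rw [hrdef, ← Real.rpow_natCast (x ^ ((1:ℝ)/(k:ℝ))) k, ← Real.rpow_mul hx0.le,
      one_div, inv_mul_cancel₀ (ne_of_gt hk0), Real.rpow_one]
  have htk : (t:ℝ) ^ k ≤ x := hrk ▸ pow_le_pow_left₀ (Nat.cast_nonneg t) htr k
  have hn1 : (0:ℝ) < (n:ℝ) + 1 := by positivity
  -- key: t < 2(k+1)m
  have h2 : ((n:ℝ)+1) * (k:ℝ) / ((k:ℝ)+1) < (k:ℝ) * (2*((n:ℝ)+1)/(t:ℝ)) * (m:ℝ) := by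
    rw [← ha]
    have hx' : x = ((n:ℝ)+1)/((k:ℝ)+1) := hxdef
    have : ((n:ℝ)+1) - x = ((n:ℝ)+1) * (k:ℝ) / ((k:ℝ)+1) := by
      rw [hx']; field_simp; ring
    linarith
  have key : (t:ℝ) < 2 * ((k:ℝ)+1) * (m:ℝ) := by
    have h3 : (k:ℝ) * (2*((n:ℝ)+1)/(t:ℝ)) * (m:ℝ) = (k:ℝ) * (2*((n:ℝ)+1)) * (m:ℝ) / (t:ℝ) := by
      ring
    rw [h3, div_lt_div_iff₀ (by positivity) htpos] at h2
    nlinarith [mul_pos hk0 hn1, mul_pos (mul_pos hk0 hn1) htpos]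
  have keyN : t < 2 * (k+1) * m := by
    have : (t:ℝ) < ((2*(k+1)*m : ℕ) : ℝ) := by push_cast; linarith
    exact_mod_cast this
  have keyN' : t + 1 ≤ 2 * (k+1) * m := keyN
  have keyR : (t:ℝ) + 1 ≤ 2 * ((k:ℝ)+1) * (m:ℝ) := by
    have : ((t+1 : ℕ) : ℝ) ≤ ((2*(k+1)*m : ℕ) : ℝ) := by exact_mod_cast keyN'
    push_cast at this; linarith
  have hfirst : ((t:ℝ) + 1) / (2 * ((k:ℝ)+1)) ≤ (m:ℝ) := by
    rw [div_le_iff₀ (by positivity)]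
    linarith
  refine ⟨hfirst, ?_⟩
  have hrlt : r < (t:ℝ) + 1 := by
    rw [ht]; push_cast; exact Nat.lt_floor_add_one r
  have hpos : (0:ℝ) < 1 / (2 * ((k:ℝ)+1)) := by positivity
  calc (1 / (2 * ((k:ℝ)+1))) * r < (1 / (2 * ((k:ℝ)+1))) * ((t:ℝ)+1) := by
        exact mul_lt_mul_of_pos_left hrlt hpos
    _ = ((t:ℝ) + 1) / (2 * ((k:ℝ)+1)) := by ring
    _ ≤ (m:ℝ) := hfirst
end

section
/- Let n, b, k be positive integers with 2 ≤ b and b^k ≤ n+1. Then there exist k permutations φ_1, …, φ_k of the set {0,1,…,n} such that for every pair of distinct elements x, y ∈ {0,1,…,n} there exists some i ∈ {1,…,k} with |φ_i(x) − φ_i(y)| > b^{k−1} − 2·b^{k−3}, where the right-hand side is computed in the reals (so b^{k−3} equals b^{−1} when k = 2 and b^{−2} when k = 1). -/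
/-!
Induction on `k`. Suppose `k` permutations `π i` of `{0, …, C - 1}` separate distinct points by
at least `s`, and `b * C ≤ m`. Sort `{0, …, m - 1}` stably by the key `π i (x mod C)`: every
key value is carried by at least `m / C ≥ b` points, so two points whose keys differ by `d`
end up at least `b * d` apart, up to a loss of `1` from the tie-break by `x / C`. Two points
closer than `C` have distinct residues, hence are separated by `b * s - 1` in one of these `k`
sorted orders; the identity separates the points farther apart than that. For `k = 2`, sorting by
the reversed residue mod `b` incurs no loss and gives separation `b`. The resulting separations
`b ^ (k - 1) - (b ^ (k - 3) + ⋯ + b + 1)` exceed `b ^ (k - 1) - 2 * b ^ (k - 3)`.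
-/

namespace SpreadingPerms

open Finset Equiv

def Spreads (m k s : ℕ) : Prop :=
  ∃ φ : Fin k → Perm (Fin m), ∀ x y : Fin m, x ≠ y → ∃ i, s ≤ Nat.dist (φ i x) (φ i y)

lemma Spreads.of_lt {m k s : ℕ} (φ : Fin k → Perm (Fin m))
    (h : ∀ x y : Fin m, x < y → ∃ i, s ≤ Nat.dist (φ i x) (φ i y)) : Spreads m k s := by
  refine ⟨φ, fun x y hxy => ?_⟩
  rcases hxy.lt_or_gt with hlt | hlt
  · exact h x y hlt
  · simpa only [Nat.dist_comm] using h y x hlt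

lemma spreads_one (m : ℕ) : Spreads m 1 1 :=
  .of_lt (fun _ => 1) fun x y hxy => ⟨0, by
    have : (x : ℕ) < y := hxy
    simp only [Perm.coe_one, id_eq, Nat.dist]
    omega⟩

lemma div_mod_cases_of_lt_of_lt_add {x y C : ℕ} (hxy : x < y) (hyx : y < x + C) :
    (y / C = x / C ∧ x % C < y % C) ∨ (y / C = x / C + 1 ∧ y % C < x % C) := by
  have hC : 0 < C := by omega
  have hx := Nat.div_add_mod x C
  have hy := Nat.div_add_mod y C
  have hxC := Nat.mod_lt x hC
  have hyC := Nat.mod_lt y hC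
  have hle : x / C ≤ y / C := Nat.div_le_div_right hxy.le
  have hle' : y / C ≤ x / C + 1 := by
    simpa [Nat.add_div_right x hC] using Nat.div_le_div_right (c := C) hyx.le
  rcases Nat.eq_or_lt_of_le hle with h | h
  · rw [← h] at hy
    omega
  · have h : y / C = x / C + 1 := by omega
    rw [h, mul_add, mul_one] at hy
    omega

section SortByResidue

variable {C : ℕ} [NeZero C] (m : ℕ) (σ : Perm (Fin C))

def key (z : ℕ) : ℕ := σ (Fin.ofNat C z)

lemma key_lt (z : ℕ) : key σ z < C := (σ _).isLt

lemma key_eq_key_iff {x y : ℕ} : key σ x = key σ y ↔ x ≡ y [MOD C] := by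
  rw [key, key, Fin.val_inj, σ.apply_eq_iff_eq, Fin.ext_iff, Fin.val_ofNat, Fin.val_ofNat]
  rfl

lemma exists_key_eq {c : ℕ} (hc : c < C) : ∃ x, key σ x = c :=
  ⟨σ.symm ⟨c, hc⟩, by simp [key]⟩

def numKeyLT (c : ℕ) : ℕ := #{z ∈ range m | key σ z < c}

lemma numKeyLT_succ (c : ℕ) :
    numKeyLT m σ (c + 1) = numKeyLT m σ c + #{z ∈ range m | key σ z = c} := by
  rw [numKeyLT, numKeyLT, ← card_union_of_disjoint (disjoint_filter.2 fun _ _ h => h.ne),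
    ← filter_or]
  exact congrArg card (filter_congr fun _ _ => Nat.lt_succ_iff_lt_or_eq)

lemma card_key_eq_key (x : ℕ) :
    #{z ∈ range m | key σ z = key σ x} = m.count (· ≡ x [MOD C]) := by
  simp only [Nat.count_eq_card_filter_range, key_eq_key_iff]

lemma div_le_card_key_eq {c : ℕ} (hc : c < C) : m / C ≤ #{z ∈ range m | key σ z = c} := by
  obtain ⟨x, rfl⟩ := exists_key_eq σ hc
  rw [card_key_eq_key, Nat.count_modEq_card _ (NeZero.pos C)]
  exact Nat.le_add_right _ _

lemma div_lt_card_key_eq {x : ℕ} (hx : x < m) : x / C < #{z ∈ range m | key σ z = key σ x} := by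
  rw [card_key_eq_key]
  calc x / C = x.count (· ≡ x [MOD C]) := by simp [Nat.count_modEq_card _ (NeZero.pos C)]
    _ < (x + 1).count (· ≡ x [MOD C]) := by simp [Nat.count_succ, Nat.ModEq.refl]
    _ ≤ m.count (· ≡ x [MOD C]) := Nat.count_monotone _ hx

lemma numKeyLT_add_mul_le {c c' : ℕ} (hcc' : c ≤ c') (hc' : c' ≤ C) :
    numKeyLT m σ c + m / C * (c' - c) ≤ numKeyLT m σ c' := by
  induction c', hcc' using Nat.le_induction with
  | base => simp
  | succ c' hcc' ih =>
    rw [numKeyLT_succ, Nat.succ_sub hcc', Nat.mul_succ]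
    have := div_le_card_key_eq m σ (c := c') (by omega)
    have := ih (by omega)
    omega

/-- The position of `x` when `range m` is sorted by `(key σ z, z)`: the points of equal key
below `x` are the `z < x` with `z ≡ x [MOD C]`, and there are `x / C` of them. -/
def sortRank (x : ℕ) : ℕ := numKeyLT m σ (key σ x) + x / C

lemma sortRank_lt_numKeyLT_succ {x : ℕ} (hx : x < m) :
    sortRank m σ x < numKeyLT m σ (key σ x + 1) := by
  rw [numKeyLT_succ]
  exact Nat.add_lt_add_left (div_lt_card_key_eq m σ hx) _

lemma sortRank_lt {x : ℕ} (hx : x < m) : sortRank m σ x < m :=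
  (sortRank_lt_numKeyLT_succ m σ hx).trans_le ((card_filter_le _ _).trans (card_range m).le)

lemma sortRank_lt_sortRank {x y : ℕ} (hx : x < m) (h : key σ x < key σ y) :
    sortRank m σ x < sortRank m σ y :=
  calc sortRank m σ x < numKeyLT m σ (key σ x + 1) := sortRank_lt_numKeyLT_succ m σ hx
    _ ≤ numKeyLT m σ (key σ y) := le_of_add_le_left (numKeyLT_add_mul_le m σ h (key_lt σ y).le)
    _ ≤ sortRank m σ y := Nat.le_add_right _ _

lemma sortRank_injOn : Set.InjOn (sortRank m σ) (Set.Iio m) := by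
  intro x hx y hy hxy
  rcases lt_trichotomy (key σ x) (key σ y) with h | h | h
  · exact absurd hxy (sortRank_lt_sortRank m σ hx h).ne
  · have hdiv : x / C = y / C := by
      unfold sortRank at hxy
      rw [h] at hxy
      omega
    have hmod : x % C = y % C := (key_eq_key_iff σ).1 h
    rw [← Nat.div_add_mod x C, ← Nat.div_add_mod y C, hdiv, hmod]
  · exact absurd hxy (sortRank_lt_sortRank m σ hy h).ne'

lemma sortRank_add_le {x y : ℕ} (h : key σ x < key σ y) :
    sortRank m σ x + m / C * (key σ y - key σ x) + y / C ≤ sortRank m σ y + x / C := by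
  have := numKeyLT_add_mul_le m σ h.le (key_lt σ y).le
  unfold sortRank
  omega

noncomputable def sortPerm : Perm (Fin m) :=
  .ofBijective (fun x => ⟨sortRank m σ x, sortRank_lt m σ x.2⟩) <|
    Finite.injective_iff_bijective.1 fun x y hxy =>
      Fin.ext (sortRank_injOn m σ x.2 y.2 (congrArg Fin.val hxy))

@[simp]
lemma coe_sortPerm (x : Fin m) : (sortPerm m σ x : ℕ) = sortRank m σ x := rfl

end SortByResidue

lemma spreads_two {b m : ℕ} [NeZero b] (hm : b * b ≤ m) : Spreads m 2 b := by
  have hq : b ≤ m / b := (Nat.le_div_iff_mul_le (NeZero.pos b)).2 hm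
  set ρ : Perm (Fin b) := Fin.revPerm
  have hkey (z : ℕ) : key ρ z = b - (z % b + 1) := by simp [ρ, key]
  refine .of_lt ![1, sortPerm m ρ] fun x y hxy => ?_
  have hxy : (x : ℕ) < y := hxy
  by_cases hfar : b ≤ (y : ℕ) - x
  · exact ⟨0, by simp only [Matrix.cons_val_zero, Perm.coe_one, id_eq, Nat.dist]; omega⟩
  refine ⟨1, ?_⟩
  simp only [Matrix.cons_val_one, Matrix.cons_val_zero, coe_sortPerm, Nat.dist]
  have hbx := Nat.mod_lt x (NeZero.pos b)
  have hby := Nat.mod_lt y (NeZero.pos b)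
  rcases div_mod_cases_of_lt_of_lt_add (C := b) hxy (by omega) with ⟨hdiv, hmod⟩ | ⟨hdiv, hmod⟩
  · have hlt : key ρ y < key ρ x := by rw [hkey, hkey]; omega
    have := sortRank_add_le m ρ hlt
    have := Nat.le_mul_of_pos_right (m / b) (Nat.sub_pos_of_lt hlt)
    omega
  · have hlt : key ρ x < key ρ y := by rw [hkey, hkey]; omega
    have := sortRank_add_le m ρ hlt
    have := Nat.le_mul_of_pos_right (m / b) (Nat.sub_pos_of_lt hlt)
    omega

lemma Spreads.succ {b C m k s : ℕ} [NeZero C] (h : Spreads C k s) (hm : b * C ≤ m)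
    (hs : b * s ≤ C) : Spreads m (k + 1) (b * s - 1) := by
  obtain ⟨π, hπ⟩ := h
  have hq : b ≤ m / C := (Nat.le_div_iff_mul_le (NeZero.pos C)).2 hm
  refine .of_lt (Fin.snoc (fun i => sortPerm m (π i)) 1) fun x y hxy => ?_
  have hxy : (x : ℕ) < y := hxy
  by_cases hfar : b * s - 1 ≤ (y : ℕ) - x
  · exact ⟨Fin.last k, by simp only [Fin.snoc_last, Perm.coe_one, id_eq, Nat.dist]; omega⟩
  have hs0 : 0 < s := Nat.pos_of_ne_zero (by rintro rfl; simp at hfar)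
  have hwindow := div_mod_cases_of_lt_of_lt_add (C := C) hxy (by omega)
  have hne : Fin.ofNat C x ≠ Fin.ofNat C y := by
    rw [Ne, Fin.ext_iff, Fin.val_ofNat, Fin.val_ofNat]
    omega
  obtain ⟨i, hi⟩ := hπ _ _ hne
  change s ≤ Nat.dist (key (π i) x) (key (π i) y) at hi
  refine ⟨i.castSucc, ?_⟩
  simp only [Fin.snoc_castSucc, coe_sortPerm, Nat.dist] at hi ⊢
  rcases lt_or_gt_of_ne (a := key (π i) x) (b := key (π i) y) (by omega) with hlt | hlt
  · have := sortRank_add_le m (π i) hlt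
    have := Nat.mul_le_mul hq (show s ≤ key (π i) y - key (π i) x by omega)
    omega
  · have := sortRank_add_le m (π i) hlt
    have := Nat.mul_le_mul hq (show s ≤ key (π i) x - key (π i) y by omega)
    omega

/-- Indexed so that `spread b j` is the separation achieved by `j + 2` permutations. -/
def spread (b : ℕ) : ℕ → ℕ
  | 0 => b
  | j + 1 => b * spread b j - 1

lemma spread_le_pow (b j : ℕ) : spread b j ≤ b ^ (j + 1) := by
  induction j with
  | zero => simp [spread]
  | succ j ih =>
    rw [spread, pow_succ']
    exact (Nat.sub_le _ _).trans (Nat.mul_le_mul_left b ih)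

lemma spreads_spread {b m : ℕ} [NeZero b] (j : ℕ) (hm : b ^ (j + 2) ≤ m) :
    Spreads m (j + 2) (spread b j) := by
  induction j generalizing m with
  | zero => exact spreads_two (b := b) (by simpa [sq] using hm)
  | succ j ih =>
    refine (ih le_rfl).succ (by rwa [← pow_succ']) ?_
    rw [pow_succ']
    exact Nat.mul_le_mul_left b (spread_le_pow b j)

lemma pow_add_one_le_spread {b : ℕ} (hb : 2 ≤ b) (j : ℕ) :
    b ^ (j + 2) + 1 ≤ spread b (j + 1) + 2 * b ^ j := by
  induction j with
  | zero =>
    have : 1 ≤ b * b := Nat.one_le_iff_ne_zero.2 (by positivity)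
    show b ^ 2 + 1 ≤ b * b - 1 + 2 * 1
    rw [sq]
    omega
  | succ j ih =>
    have := Nat.mul_le_mul_left b ih
    rw [show b * (b ^ (j + 2) + 1) = b ^ (j + 3) + b by ring,
      show b * (spread b (j + 1) + 2 * b ^ j) = b * spread b (j + 1) + 2 * b ^ (j + 1) by ring]
      at this
    show b ^ (j + 3) + 1 ≤ b * spread b (j + 1) - 1 + 2 * b ^ (j + 1)
    omega

lemma lt_spread {b : ℕ} (hb : 2 ≤ b) (j : ℕ) :
    (b : ℝ) ^ ((j : ℤ) + 1) - 2 * (b : ℝ) ^ ((j : ℤ) - 1) < spread b j := by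
  cases j with
  | zero =>
    simp only [spread, Nat.cast_zero, zero_add, zpow_one]
    linarith [zpow_pos (show (0 : ℝ) < b by positivity) (0 - 1)]
  | succ j =>
    have hcast : ((b ^ (j + 2) + 1 : ℕ) : ℝ) ≤ (spread b (j + 1) + 2 * b ^ j : ℕ) := by
      exact_mod_cast pow_add_one_le_spread hb j
    push_cast at hcast ⊢
    rw [show (j : ℤ) + 1 + 1 = ((j + 2 : ℕ) : ℤ) by push_cast; ring,
      show (j : ℤ) + 1 - 1 = (j : ℕ) by ring, zpow_natCast, zpow_natCast]
    linarith

lemma exists_spreads_gt {b k m : ℕ} (hb : 2 ≤ b) (hk : 1 ≤ k) (hm : b ^ k ≤ m) :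
    ∃ s : ℕ, Spreads m k s ∧ (b : ℝ) ^ ((k : ℤ) - 1) - 2 * (b : ℝ) ^ ((k : ℤ) - 3) < s := by
  obtain rfl | ⟨j, rfl⟩ : k = 1 ∨ ∃ j, k = j + 2 := by
    rcases k with _ | _ | j <;> simp_all
  · exact ⟨1, spreads_one m, by norm_num [show (0 : ℝ) < (b : ℝ) ^ 2 by positivity]⟩
  · have : NeZero b := ⟨by omega⟩
    refine ⟨spread b j, spreads_spread j hm, ?_⟩
    convert lt_spread hb j using 4 <;> push_cast <;> ring

lemma natCast_dist (a c : ℕ) : ((Nat.dist a c : ℕ) : ℝ) = |(a : ℝ) - c| := by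
  rcases le_total a c with h | h
  · rw [Nat.dist_eq_sub_of_le h, Nat.cast_sub h, abs_sub_comm, abs_of_nonneg (by simpa)]
  · rw [Nat.dist_eq_sub_of_le_right h, Nat.cast_sub h, abs_of_nonneg (by simpa)]

end SpreadingPerms

theorem exists_spreading_perms_general (n b k : ℕ) (hk : 1 ≤ k)
    (hb : 2 ≤ b) (hbk : b ^ k ≤ n + 1) :
    ∃ φ : Fin k → Equiv.Perm (Fin (n + 1)),
      ∀ x y : Fin (n + 1), x ≠ y → ∃ i : Fin k,
        (b : ℝ) ^ ((k : ℤ) - 1) - 2 * (b : ℝ) ^ ((k : ℤ) - 3) <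
          |(((φ i x : ℕ) : ℝ)) - (((φ i y : ℕ) : ℝ))| := by
  obtain ⟨s, ⟨φ, hφ⟩, hs⟩ := SpreadingPerms.exists_spreads_gt hb hk hbk
  refine ⟨φ, fun x y hxy => ?_⟩
  obtain ⟨i, hi⟩ := hφ x y hxy
  refine ⟨i, hs.trans_le ?_⟩
  rw [← SpreadingPerms.natCast_dist]
  exact_mod_cast hi

/-- for positive integers `n, b, k` with `2 ≤ b` and `b^k ≤ n+1`,
there are `k` permutations `φ_1, …, φ_k` of `{0,1,…,n}` such that any two
distinct `x, y` satisfy `|φ_i(x) − φ_i(y)| > b^(k−1) − 2·b^(k−3)` for some `i`,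
the right-hand side being computed in the reals. -/
theorem exists_spreading_perms (n b k : ℕ) (hn : 1 ≤ n) (hk : 1 ≤ k)
    (hb : 2 ≤ b) (hbk : b ^ k ≤ n + 1) :
    ∃ φ : Fin k → Equiv.Perm (Fin (n + 1)),
      ∀ x y : Fin (n + 1), x ≠ y → ∃ i : Fin k,
        (b : ℝ) ^ ((k : ℤ) - 1) - 2 * (b : ℝ) ^ ((k : ℤ) - 3) <
          |(((φ i x : ℕ) : ℝ)) - (((φ i y : ℕ) : ℝ))| :=
  exists_spreading_perms_general n b k hk hb hbk
end

section
/- Let k ≥ 2 and n ≥ 1 be integers, let X = {0,1,…,n}, and set a = (n+1)^{(k−1)/(k+1)} (a real power). For each i ∈ {1,…,k} let P_i be a partition of X in which every part has size strictly less than a. Then the sum, over all k-tuples (σ_1,…,σ_k) of permutations of X, of the number of unordered pairs {x,y} of distinct elements of X such that for every i ∈ {1,…,k} the elements σ_i(x) and σ_i(y) lie in the same part of P_i, is strictly less than n^{2/(k+1)}·((n+1)!)^k, where n^{2/(k+1)} is a real power. -/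
/-!
Fix distinct `x, y` and write `N = n + 1`. As `τ` runs over the permutations, `(τ x, τ y)` is
uniformly distributed over the `N (N - 1)` off-diagonal pairs, and the coordinates of `σ` are
independent. Hence `{x, y}` is bad for exactly `∏ᵢ |Bᵢ| (N - 2)!` tuples, where `Bᵢ` is the set of
off-diagonal pairs inside one part of `Pᵢ`, and `|Bᵢ| = ∑ |p| (|p| - 1) ≤ (a - 1) N`. Summing over
the `N (N - 1) / 2` pairs bounds the total by `N (N - 1) / 2 · ((a - 1) N! / (N - 1))ᵏ`.
With `a = (n + 1)ᵗ`, `t = (k - 1) / (k + 1)`, strict subadditivity `(n + 1)ᵗ < nᵗ + 1` and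
`(n + 1) / 2 ≤ n` turn this into `n ^ (2 / (k + 1)) · (N!)ᵏ`.
-/

open Finset Equiv
open scoped Nat

variable {α ι : Type*} [DecidableEq α]

lemma Equiv.Perm.exists_apply_eq_and_apply_eq {u v u' v' : α} (huv : u ≠ v) (huv' : u' ≠ v') :
    ∃ ρ : Perm α, ρ u = u' ∧ ρ v = v' := by
  refine ⟨swap (swap u u' v) v' * swap u u', ?_, by simp⟩
  have hne : swap u u' v ≠ u' := by
    rw [Ne, swap_apply_eq_iff, swap_apply_right]; exact huv.symm
  simpa using swap_apply_of_ne_of_ne hne.symm huv'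

variable [Fintype α]

lemma card_filter_perm_apply_pair_eq {x y : α} {b b' : α × α} (hb : b.1 ≠ b.2)
    (hb' : b'.1 ≠ b'.2) :
    #{τ : Perm α | (τ x, τ y) = b} = #{τ : Perm α | (τ x, τ y) = b'} := by
  obtain ⟨u, v⟩ := b
  obtain ⟨u', v'⟩ := b'
  obtain ⟨ρ, rfl, rfl⟩ := Perm.exists_apply_eq_and_apply_eq hb hb'
  exact card_equiv (Equiv.mulLeft ρ) fun τ => by simp

lemma card_filter_perm_apply_pair_mem {x y : α} (hxy : x ≠ y) {B : Finset (α × α)}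
    (hB : B ⊆ univ.offDiag) :
    #{τ : Perm α | (τ x, τ y) ∈ B} = #B * #{τ : Perm α | (τ x, τ y) = (x, y)} := by
  rw [card_eq_sum_card_fiberwise (f := fun τ : Perm α => (τ x, τ y)) (t := B)
    (fun τ hτ => by simpa using hτ)]
  refine sum_const_nat fun b hb => ?_
  rw [filter_filter, filter_congr fun τ _ => and_iff_right_of_imp fun h => h ▸ hb]
  exact card_filter_perm_apply_pair_eq (mem_offDiag.1 (hB hb)).2.2 hxy

lemma card_perm_mul_card_filter_perm_apply_pair {x y : α} (hxy : x ≠ y) :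
    (Fintype.card α : ℝ) * (Fintype.card α - 1) * #{τ : Perm α | (τ x, τ y) = (x, y)}
      = (Fintype.card α)! := by
  have h := card_filter_perm_apply_pair_mem hxy (subset_refl (univ : Finset α).offDiag)
  simp only [mem_offDiag, mem_univ, true_and, ne_eq, EmbeddingLike.apply_eq_iff_eq, hxy,
    not_false_eq_true, filter_true, card_univ, Fintype.card_perm, offDiag_card] at h
  rw [h, Nat.cast_mul, Nat.cast_sub (Nat.le_mul_self _)]
  push_cast
  ring

def Finpartition.sameBlockPairs {s : Finset α} (P : Finpartition s) : Finset (α × α) :=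
  s.offDiag.filter fun b => ∃ p ∈ P.parts, b.1 ∈ p ∧ b.2 ∈ p

omit [Fintype α] in
lemma Finpartition.card_sameBlockPairs_le {s : Finset α} (P : Finpartition s) {a : ℝ}
    (hP : ∀ p ∈ P.parts, (#p : ℝ) ≤ a) :
    (#P.sameBlockPairs : ℝ) ≤ (a - 1) * #s := by
  have hsub : P.sameBlockPairs ⊆ P.parts.biUnion offDiag := by
    intro b hb
    obtain ⟨hb, p, hp, h1, h2⟩ := mem_filter.1 hb
    exact mem_biUnion.2 ⟨p, hp, mem_offDiag.2 ⟨h1, h2, (mem_offDiag.1 hb).2.2⟩⟩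
  calc (#P.sameBlockPairs : ℝ) ≤ ∑ p ∈ P.parts, (#p.offDiag : ℝ) := by
        exact_mod_cast (card_le_card hsub).trans card_biUnion_le
    _ ≤ ∑ p ∈ P.parts, (a - 1) * #p := sum_le_sum fun p hp => by
        rw [offDiag_card, Nat.cast_sub (Nat.le_mul_self _), Nat.cast_mul]
        nlinarith [hP p hp]
    _ = (a - 1) * #s := by rw [← mul_sum, ← Nat.cast_sum, P.sum_card_parts]

def IsBadPair (P : ι → Finpartition (univ : Finset α)) (σ : ι → Perm α) (x y : α) : Prop :=
  ∀ i, ∃ p ∈ (P i).parts, σ i x ∈ p ∧ σ i y ∈ p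

instance [Fintype ι] (P : ι → Finpartition (univ : Finset α)) (σ : ι → Perm α) (x y : α) :
    Decidable (IsBadPair P σ x y) :=
  inferInstanceAs (Decidable (∀ _, _))

lemma IsBadPair.symm {P : ι → Finpartition (univ : Finset α)} {σ : ι → Perm α} {x y : α}
    (h : IsBadPair P σ x y) : IsBadPair P σ y x := fun i => by
  obtain ⟨p, hp, hx, hy⟩ := h i
  exact ⟨p, hp, hy, hx⟩

variable [Fintype ι] [DecidableEq ι]

lemma card_filter_isBadPair_le {P : ι → Finpartition (univ : Finset α)} {a : ℝ}
    (hP : ∀ i, ∀ p ∈ (P i).parts, (#p : ℝ) ≤ a) {x y : α} (hxy : x ≠ y) :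
    (#{σ : ι → Perm α | IsBadPair P σ x y} : ℝ)
      ≤ ((a - 1) * (Fintype.card α)! / (Fintype.card α - 1)) ^ Fintype.card ι := by
  set c := #{τ : Perm α | (τ x, τ y) = (x, y)}
  have hN : (1 : ℝ) < Fintype.card α := by
    exact_mod_cast Fintype.one_lt_card_iff.2 ⟨x, y, hxy⟩
  have hpi : ({σ : ι → Perm α | IsBadPair P σ x y} : Finset _)
      = Fintype.piFinset fun i => {τ : Perm α | (τ x, τ y) ∈ (P i).sameBlockPairs} := by
    ext σ
    simp only [mem_filter, mem_univ, true_and, Fintype.mem_piFinset]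
    simp [IsBadPair, Finpartition.sameBlockPairs, hxy]
  have hfactor (i : ι) : (#{τ : Perm α | (τ x, τ y) ∈ (P i).sameBlockPairs} : ℝ)
      ≤ (a - 1) * (Fintype.card α)! / (Fintype.card α - 1) := by
    rw [card_filter_perm_apply_pair_mem hxy (B := (P i).sameBlockPairs) (filter_subset _ _),
      Nat.cast_mul, ← card_perm_mul_card_filter_perm_apply_pair hxy, le_div_iff₀ (by linarith)]
    have hB := (P i).card_sameBlockPairs_le (hP i)
    rw [card_univ] at hB
    nlinarith [mul_le_mul_of_nonneg_right hB
      (mul_nonneg (Nat.cast_nonneg c) (sub_nonneg.2 hN.le))]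
  rw [hpi, Fintype.card_piFinset, Nat.cast_prod]
  refine (prod_le_prod (fun _ _ => Nat.cast_nonneg _) fun i _ => hfactor i).trans_eq ?_
  rw [prod_const, card_univ]

theorem sum_ncard_isBadPair_le {P : ι → Finpartition (univ : Finset α)} {a : ℝ}
    (hP : ∀ i, ∀ p ∈ (P i).parts, (#p : ℝ) ≤ a) :
    ∑ σ : ι → Perm α,
        ({q : Sym2 α | ∃ x y, q = s(x, y) ∧ x ≠ y ∧ IsBadPair P σ x y}.ncard : ℝ)
      ≤ (Fintype.card α).choose 2 *
          ((a - 1) * (Fintype.card α)! / (Fintype.card α - 1)) ^ Fintype.card ι := by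
  classical
  set r : (ι → Perm α) → Sym2 α → Prop :=
    fun σ q => ∃ x y, q = s(x, y) ∧ x ≠ y ∧ IsBadPair P σ x y
  set bound := ((a - 1) * (Fintype.card α)! / (Fintype.card α - 1)) ^ Fintype.card ι
  have hdiag (q : Sym2 α) (hq : #(univ.bipartiteBelow r q) ≠ 0) : ¬q.IsDiag := by
    obtain ⟨σ, hσ⟩ := card_ne_zero.1 hq
    obtain ⟨x, y, rfl, hxy, -⟩ := (mem_filter.1 hσ).2
    exact Sym2.mk_isDiag_iff.not.2 hxy
  have hpair (q : Sym2 α) (hq : ¬q.IsDiag) : (#(univ.bipartiteBelow r q) : ℝ) ≤ bound := by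
    induction q using Sym2.inductionOn with
    | hf x y =>
      refine le_trans (Nat.cast_le.2 (card_le_card fun σ hσ => ?_))
        (card_filter_isBadPair_le hP (Sym2.mk_isDiag_iff.not.1 hq))
      obtain ⟨x', y', hq', -, hbad⟩ := (mem_filter.1 hσ).2
      refine mem_filter.2 ⟨mem_univ _, ?_⟩
      rcases Sym2.eq_iff.1 hq' with ⟨rfl, rfl⟩ | ⟨rfl, rfl⟩
      exacts [hbad, hbad.symm]
  calc ∑ σ : ι → Perm α, ({q | r σ q}.ncard : ℝ)
      = ∑ q : Sym2 α, (#(univ.bipartiteBelow r q) : ℝ) := by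
        rw [← Nat.cast_sum, ← Nat.cast_sum, ← sum_card_bipartiteAbove_eq_sum_card_bipartiteBelow]
        congr 1
        refine sum_congr rfl fun σ _ => ?_
        rw [← Set.ncard_coe_finset, bipartiteAbove, coe_filter_univ]
    _ = ∑ q ∈ univ.filter (fun q : Sym2 α => ¬q.IsDiag), (#(univ.bipartiteBelow r q) : ℝ) :=
        (sum_filter_of_ne fun q _ hq => hdiag q (by exact_mod_cast hq)).symm
    _ ≤ ∑ q ∈ univ.filter (fun q : Sym2 α => ¬q.IsDiag), bound :=
        sum_le_sum fun q hq => hpair q (mem_filter.1 hq).2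
    _ = (Fintype.card α).choose 2 * bound := by
        rw [sum_const, nsmul_eq_mul, ← Fintype.card_subtype, Sym2.card_subtype_not_diag]

lemma Real.add_one_rpow_lt_rpow_add_one {x t : ℝ} (hx : 0 < x) (ht : t < 1) :
    (x + 1) ^ t < x ^ t + 1 := by
  have hshift {y : ℝ} (hy : 0 < y) : y ^ t = y ^ (t - 1) * y := by
    rw [← Real.rpow_add_one hy.ne', sub_add_cancel]
  have hlt : (x + 1) ^ (t - 1) < x ^ (t - 1) :=
    Real.rpow_lt_rpow_of_neg hx (by linarith) (by linarith)
  have hle : (x + 1) ^ (t - 1) ≤ 1 :=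
    Real.rpow_le_one_of_one_le_of_nonpos (by linarith) (by linarith)
  calc (x + 1) ^ t = (x + 1) ^ (t - 1) * x + (x + 1) ^ (t - 1) := by
        rw [hshift (by linarith)]; ring
    _ < x ^ (t - 1) * x + 1 := by linarith [mul_lt_mul_of_pos_right hlt hx]
    _ = x ^ t + 1 := by rw [hshift hx]

lemma add_one_mul_div_two_mul_rpow_div_pow_le {n : ℝ} (hn : 1 ≤ n) (k : ℕ) :
    (n + 1) * n / 2 * (n ^ (((k : ℝ) - 1) / ((k : ℝ) + 1)) / n) ^ k
      ≤ n ^ ((2 : ℝ) / ((k : ℝ) + 1)) := by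
  have hn0 : 0 < n := by linarith
  have hexp : (2 : ℝ) / ((k : ℝ) + 1) = 2 + ((((k : ℝ) - 1) / ((k : ℝ) + 1)) - 1) * k := by
    field_simp; ring
  rw [hexp, Real.rpow_add hn0, Real.rpow_mul hn0.le, Real.rpow_sub_one hn0.ne',
    Real.rpow_natCast, Real.rpow_two]
  gcongr
  nlinarith

/-- for `k ≥ 2`, `n ≥ 1`, `a = (n+1)^((k−1)/(k+1))` and partitions
`P_1, …, P_k` of `{0,1,…,n}` all of whose parts have size `< a`, the sum over
all `k`-tuples of permutations `σ` of `{0,1,…,n}` of the number of unordered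
pairs `{x,y}` of distinct elements with `σ_i(x), σ_i(y)` in the same part of
`P_i` for every `i`, is strictly less than `n^(2/(k+1))·((n+1)!)^k`. -/
theorem sum_bad_pairs_lt (k n : ℕ) (hk : 2 ≤ k) (hn : 1 ≤ n)
    (a : ℝ) (ha : a = ((n : ℝ) + 1) ^ (((k : ℝ) - 1) / ((k : ℝ) + 1)))
    (P : Fin k → Finpartition (Finset.univ : Finset (Fin (n + 1))))
    (hP : ∀ i : Fin k, ∀ p ∈ (P i).parts, ((p.card : ℝ) < a)) :
    (∑ σ : Fin k → Equiv.Perm (Fin (n + 1)),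
        ({q : Sym2 (Fin (n + 1)) | ∃ x y : Fin (n + 1), q = s(x, y) ∧ x ≠ y ∧
          ∀ i : Fin k, ∃ p ∈ (P i).parts, σ i x ∈ p ∧ σ i y ∈ p}.ncard : ℝ))
      < (n : ℝ) ^ ((2 : ℝ) / ((k : ℝ) + 1)) * (Nat.factorial (n + 1) : ℝ) ^ k := by
  set t := ((k : ℝ) - 1) / ((k : ℝ) + 1)
  have hn1 : (1 : ℝ) ≤ n := by exact_mod_cast hn
  have hk1 : (1 : ℝ) ≤ k := by exact_mod_cast one_le_two.trans hk
  have ht0 : 0 ≤ t := div_nonneg (by linarith) (by linarith)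
  have ht1 : t < 1 := (div_lt_one (by linarith)).2 (by linarith)
  have ha1 : 0 ≤ a - 1 := by
    rw [ha, sub_nonneg]; exact Real.one_le_rpow (by linarith) ht0
  have ha_lt : a - 1 < (n : ℝ) ^ t := by
    rw [ha]; linarith [Real.add_one_rpow_lt_rpow_add_one (x := n) (by linarith) ht1]
  have hcount := sum_ncard_isBadPair_le (fun i p hp => (hP i p hp).le)
  simp only [Fintype.card_fin, Nat.cast_choose_two, Nat.cast_add, Nat.cast_one,
    add_sub_cancel_right] at hcount
  calc _ ≤ _ := hcount
    _ < ((n : ℝ) + 1) * n / 2 * ((n : ℝ) ^ t * (n + 1)! / n) ^ k := by gcongr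
    _ = ((n : ℝ) + 1) * n / 2 * ((n : ℝ) ^ t / n) ^ k * ((n + 1)! : ℝ) ^ k := by ring
    _ ≤ (n : ℝ) ^ ((2 : ℝ) / ((k : ℝ) + 1)) * ((n + 1)! : ℝ) ^ k := by
        gcongr
        exact add_one_mul_div_two_mul_rpow_div_pow_le hn1 k
end
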